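/- Energy inequality for E₀ (Lemma 6.1): let η₊, η₋ ∈ (−1/√3, 1/√3) with η₊ ≠ η₋, let η̃ be the mixing profile, and set η₀ = max(|η₊|, |η₋|), η̄ = (η₀ + 1/√3)/2, ā = a(η̄), ε = η̄ − η₀. Let 0 ≤ τ₁ ≤ τ₂ and let (ψ, s) be a solution of system (2.12) on [τ₁, τ₂] × ℝ (smooth, with ψ(τ,·), s(τ,·) Schwartz in ξ for each τ, depending continuously on τ in every Schwartz seminorm) satisfying ‖ψ(τ,·)‖_{H²} + ‖s(τ,·)‖_{H¹} ≤ ε for all τ ∈ [τ₁, τ₂]. Then for every ν > 0 there exists K₂ > 0 such that the function E₀(τ) = (1/2)∫_ℝ ψ(τ,ξ)² dξ is continuously differentiable on [τ₁, τ₂] and satisfies E₀′(τ) ≤ −(3/2 − ν)·E₀(τ) − ā·∫_ℝ (∂ξψ(τ,ξ))² dξ + K₂·∫_ℝ (∂ξs(τ,ξ))² dξ for all τ ∈ [τ₁, τ₂]. -/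

import Mathlib

/-!
Multiply the `ψ`-equation by `ψ` and integrate over `ξ`. The transport part
`(ξ/2) ∂ξψ - ψ/2` contributes `-(3/4) ∫ ψ²`, since `∫ ξ ψ ∂ξψ = -(1/2) ∫ ψ²`. Writing the flux
as `G = A(η̃ + ∂ξψ) - A(η̃)`, an integration by parts turns `∫ ψ ∂ξG` into `-∫ ∂ξψ G`, and
`∂ξψ G ≥ ā (∂ξψ)²` because `A' = a ≥ ā` on `[-η̄, η̄]`. Both `η̃` and `η = η̃ + ∂ξψ` stay in that
interval: `|η̃| ≤ η₀` because the profile is monotone, and `|∂ξψ| ≤ ‖ψ‖_{H²} ≤ ε` by the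
one-dimensional Sobolev embedding. The coupling term `ψ η ∂ξs` is absorbed by Young's
inequality, with `K₂ = η̄² / (2ν)`. Finally `E₀` may be differentiated under the integral sign,
since the Schwartz seminorms of `ψ(τ)` and `∂τψ(τ)` are bounded on the compact time interval.
-/

noncomputable section

open Real Filter MeasureTheory Set

/-- The coefficient `a(η) = (1 - 3η²)/(1 - η²)`. -/
def aGL (η : ℝ) : ℝ := (1 - 3 * η ^ 2) / (1 - η ^ 2)

/-- The primitive `A(η) = ∫₀^η a(s) ds`. -/
def AGL (η : ℝ) : ℝ := ∫ s in (0:ℝ)..η, aGL s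

/-- The coefficient `a₁(η) = (1 + η²)/(1 - η²)`. -/
def a1GL (η : ℝ) : ℝ := (1 + η ^ 2) / (1 - η ^ 2)

/-- The coefficient `a₂(η) = -4η³/(1 - η²)²`. -/
def a2GL (η : ℝ) : ℝ := -4 * η ^ 3 / (1 - η ^ 2) ^ 2

/-- The coefficient `a₃(η) = -(2 + 6η²)/(1 - η²)³`. -/
def a3GL (η : ℝ) : ℝ := -(2 + 6 * η ^ 2) / (1 - η ^ 2) ^ 3

/-- A mixing profile for boundary values `ηp` (at `+∞`) and `ηm` (at `-∞`). -/
def IsMixingProfile (ηp ηm : ℝ) (e : ℝ → ℝ) : Prop :=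
  ContDiff ℝ 2 e ∧
  (∀ ξ, e ξ ∈ Set.Ioo (-(1 / Real.sqrt 3)) (1 / Real.sqrt 3)) ∧
  (∀ ξ, deriv (deriv (fun x => AGL (e x))) ξ + ξ / 2 * deriv e ξ = 0) ∧
  Filter.Tendsto e Filter.atTop (nhds ηp) ∧
  Filter.Tendsto e Filter.atBot (nhds ηm)

/-- The `H²` norm `(∫ (f² + f'² + f''²))^{1/2}`. -/
def H2norm (f : ℝ → ℝ) : ℝ :=
  Real.sqrt (∫ ξ : ℝ, (f ξ ^ 2 + deriv f ξ ^ 2 + deriv (deriv f) ξ ^ 2))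

/-- The `H¹` norm `(∫ (f² + f'²))^{1/2}`. -/
def H1norm (f : ℝ → ℝ) : ℝ :=
  Real.sqrt (∫ ξ : ℝ, (f ξ ^ 2 + deriv f ξ ^ 2))

/-- A solution `(ψ, s)` of system (2.12) on the time interval `I`, written with
`η(τ,ξ) = η̃(ξ) + ∂ξψ(τ,ξ)`.  For every `τ ∈ I` the functions `ψ(τ,·)`, `s(τ,·)`
are Schwartz functions, depending continuously on `τ` (in the Schwartz
topology, i.e. in every Schwartz seminorm), with pointwise time derivatives
`dΨ`, `dS` which are again Schwartz and continuous in `τ`, and the two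
evolution equations hold pointwise. -/
def IsSolution212 (e : ℝ → ℝ) (Ψ S dΨ dS : ℝ → SchwartzMap ℝ ℝ) (I : Set ℝ) : Prop :=
  ContinuousOn Ψ I ∧ ContinuousOn S I ∧ ContinuousOn dΨ I ∧ ContinuousOn dS I ∧
  (∀ τ ∈ I, ∀ ξ : ℝ, HasDerivWithinAt (fun t => Ψ t ξ) (dΨ τ ξ) I τ) ∧
  (∀ τ ∈ I, ∀ ξ : ℝ, HasDerivWithinAt (fun t => S t ξ) (dS τ ξ) I τ) ∧
  (∀ τ ∈ I, ∀ ξ : ℝ,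
    dΨ τ ξ =
      deriv (fun x => AGL (e x + deriv (Ψ τ) x) - AGL (e x)) ξ
      + ξ / 2 * deriv (Ψ τ) ξ - (1 / 2) * Ψ τ ξ
      + (e ξ + deriv (Ψ τ) ξ) * deriv (S τ) ξ) ∧
  (∀ τ ∈ I, ∀ ξ : ℝ,
    dS τ ξ =
      a1GL (e ξ + deriv (Ψ τ) ξ) * deriv (deriv (S τ)) ξ
      + a2GL (e ξ + deriv (Ψ τ) ξ) * deriv (deriv (fun x => e x + deriv (Ψ τ) x)) ξ
      + ξ / 2 * deriv (S τ) ξ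
      - 2 * Real.exp τ * (1 - (e ξ + deriv (Ψ τ) ξ) ^ 2) * (Real.exp (S τ ξ) - 1)
      + (1 / 2) * (deriv (S τ) ξ) ^ 2
      + a3GL (e ξ + deriv (Ψ τ) ξ) * (deriv (fun x => e x + deriv (Ψ τ) x) ξ) ^ 2)

open Topology SchwartzMap

lemma one_sub_sq_pos_of_abs_lt_one {x : ℝ} (hx : |x| < 1) : 0 < 1 - x ^ 2 := by
  nlinarith [abs_nonneg x, sq_abs x]

lemma three_mul_sq_lt_one {x : ℝ} (hx : |x| < 1 / √3) : 3 * x ^ 2 < 1 := by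
  have h3 : (0:ℝ) < √3 := by positivity
  have h : |x| * √3 < 1 := (lt_div_iff₀ h3).1 hx
  nlinarith [sq_abs x, Real.sq_sqrt (show (0:ℝ) ≤ 3 by norm_num), abs_nonneg x,
    mul_nonneg (abs_nonneg x) h3.le]

lemma one_div_sqrt_three_lt_one : 1 / √3 < 1 :=
  (div_lt_one (by positivity)).2 ((Real.lt_sqrt zero_le_one).2 (by norm_num))

lemma abs_lt_one_of_abs_lt_inv_sqrt_three {x : ℝ} (hx : |x| < 1 / √3) : |x| < 1 :=
  hx.trans one_div_sqrt_three_lt_one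

lemma aGL_eq_three_sub {x : ℝ} (hx : |x| < 1) : aGL x = 3 - 2 / (1 - x ^ 2) := by
  have := one_sub_sq_pos_of_abs_lt_one hx
  rw [aGL]; field_simp; ring

lemma aGL_pos {x : ℝ} (hx : |x| < 1 / √3) : 0 < aGL x :=
  div_pos (by linarith [three_mul_sq_lt_one hx])
    (one_sub_sq_pos_of_abs_lt_one (abs_lt_one_of_abs_lt_inv_sqrt_three hx))

lemma aGL_le_one {x : ℝ} (hx : |x| < 1) : aGL x ≤ 1 := by
  rw [aGL, div_le_one (one_sub_sq_pos_of_abs_lt_one hx)]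
  nlinarith [sq_nonneg x]

lemma aGL_le_aGL_of_abs_le {x y : ℝ} (hxy : |x| ≤ |y|) (hy : |y| < 1) : aGL y ≤ aGL x := by
  have hx : |x| < 1 := hxy.trans_lt hy
  rw [aGL_eq_three_sub hx, aGL_eq_three_sub hy]
  have hsq : x ^ 2 ≤ y ^ 2 := sq_le_sq.2 hxy
  gcongr
  exact one_sub_sq_pos_of_abs_lt_one hy

lemma differentiableAt_aGL {x : ℝ} (hx : |x| < 1) : DifferentiableAt ℝ aGL x :=
  DifferentiableAt.div (by fun_prop) (by fun_prop) (one_sub_sq_pos_of_abs_lt_one hx).ne'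

lemma hasDerivAt_AGL {x : ℝ} (hx : |x| < 1) : HasDerivAt AGL (aGL x) x := by
  have hcont : ContinuousOn aGL (Ioo (-1) 1) := fun y hy =>
    (differentiableAt_aGL (abs_lt.2 hy)).continuousAt.continuousWithinAt
  have hx' : x ∈ Ioo (-1 : ℝ) 1 := abs_lt.1 hx
  exact intervalIntegral.integral_hasDerivAt_right
    ((hcont.mono (ordConnected_Ioo.uIcc_subset (by norm_num) hx')).intervalIntegrable)
    (hcont.stronglyMeasurableAtFilter isOpen_Ioo x hx')
    (hcont.continuousAt (isOpen_Ioo.mem_nhds hx'))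

lemma exists_AGL_sub_eq {x y : ℝ} (hx : |x| < 1) (hy : |y| < 1) :
    ∃ c, |c| ≤ max |x| |y| ∧ AGL y - AGL x = aGL c * (y - x) := by
  have key : ∀ {a b : ℝ}, |a| < 1 → |b| < 1 → a < b →
      ∃ c, |c| ≤ max |a| |b| ∧ AGL b - AGL a = aGL c * (b - a) := by
    intro a b ha hb hab
    have hderiv : ∀ c ∈ Icc a b, HasDerivAt AGL (aGL c) c := fun c hc =>
      hasDerivAt_AGL (abs_le_max_abs_abs hc.1 hc.2 |>.trans_lt (max_lt ha hb))
    obtain ⟨c, hc, hslope⟩ := exists_hasDerivAt_eq_slope AGL aGL hab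
      (fun c hc => (hderiv c hc).continuousAt.continuousWithinAt)
      (fun c hc => hderiv c (Ioo_subset_Icc_self hc))
    refine ⟨c, abs_le_max_abs_abs hc.1.le hc.2.le, ?_⟩
    rw [hslope, div_mul_cancel₀ _ (sub_ne_zero.2 hab.ne')]
  rcases lt_trichotomy x y with hxy | rfl | hxy
  · exact key hx hy hxy
  · exact ⟨x, by simp, by simp⟩
  · obtain ⟨c, hc, h⟩ := key hy hx hxy
    exact ⟨c, by rwa [max_comm], by linarith⟩

lemma aGL_mul_sq_le_mul_AGL_sub {ηb x y : ℝ} (hb : ηb < 1) (hx : |x| ≤ ηb) (hy : |y| ≤ ηb) :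
    aGL ηb * (y - x) ^ 2 ≤ (y - x) * (AGL y - AGL x) := by
  obtain ⟨c, hc, h⟩ := exists_AGL_sub_eq (hx.trans_lt hb) (hy.trans_lt hb)
  have hcb : |c| ≤ |ηb| := hc.trans ((max_le hx hy).trans (le_abs_self ηb))
  have hηb : |ηb| < 1 := abs_lt.2 ⟨by linarith [abs_nonneg x], hb⟩
  rw [h]
  nlinarith [aGL_le_aGL_of_abs_le hcb hηb, sq_nonneg (y - x)]

lemma abs_AGL_sub_le {x y : ℝ} (hx : |x| < 1 / √3) (hy : |y| < 1 / √3) :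
    |AGL y - AGL x| ≤ |y - x| := by
  obtain ⟨c, hc, h⟩ := exists_AGL_sub_eq (abs_lt_one_of_abs_lt_inv_sqrt_three hx)
    (abs_lt_one_of_abs_lt_inv_sqrt_three hy)
  have hc3 : |c| < 1 / √3 := hc.trans_lt (max_lt hx hy)
  rw [h, abs_mul, abs_of_pos (aGL_pos hc3)]
  exact mul_le_of_le_one_left (abs_nonneg _) (aGL_le_one (abs_lt_one_of_abs_lt_inv_sqrt_three hc3))

lemma eq_mul_exp_integral_of_hasDerivAt {w c : ℝ → ℝ} (hc : Continuous c)
    (hw : ∀ x, HasDerivAt w (c x * w x) x) (x : ℝ) :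
    w x = w 0 * exp (∫ t in (0:ℝ)..x, c t) := by
  set F : ℝ → ℝ := fun x => ∫ t in (0:ℝ)..x, c t
  have hconst : ∀ x, HasDerivAt (fun x => w x * exp (-F x)) 0 x := fun x =>
    ((hw x).mul (hc.integral_hasStrictDerivAt 0 x).hasDerivAt.neg.exp).congr_deriv (by ring)
  have h := is_const_of_deriv_eq_zero (fun x => (hconst x).differentiableAt)
    (fun x => (hconst x).deriv) x 0
  simp only [F, intervalIntegral.integral_same, neg_zero, exp_zero, mul_one] at h
  rw [← h, mul_assoc, ← exp_add, neg_add_cancel, exp_zero, mul_one]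

/-- The profile equation says that `w = a(η̃) η̃'` solves the linear ODE `w' = -ξ w / (2 a(η̃))`,
so `η̃'` has a constant sign and `η̃` lies between its limits. -/
lemma IsMixingProfile.abs_le {ηp ηm : ℝ} {e : ℝ → ℝ} (he : IsMixingProfile ηp ηm e) (ξ : ℝ) :
    |e ξ| ≤ max |ηp| |ηm| := by
  obtain ⟨hC2, hrange, hode, htop, hbot⟩ := he
  have habs : ∀ x, |e x| < 1 / √3 := fun x => abs_lt.2 (hrange x)
  have habs1 : ∀ x, |e x| < 1 := fun x => abs_lt_one_of_abs_lt_inv_sqrt_three (habs x)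
  have hd : Differentiable ℝ e := hC2.differentiable (by norm_num)
  have hd' : Differentiable ℝ (deriv e) := hC2.differentiable_deriv_two
  set w : ℝ → ℝ := fun x => aGL (e x) * deriv e x with hw_def
  have hflux : deriv (fun x => AGL (e x)) = w :=
    funext fun x => ((hasDerivAt_AGL (habs1 x)).comp x (hd x).hasDerivAt).deriv
  have hw : ∀ x, HasDerivAt w (-(x / (2 * aGL (e x))) * w x) x := fun x => by
    have hwd : DifferentiableAt ℝ w x :=
      ((differentiableAt_aGL (habs1 x)).comp x (hd x)).mul (hd' x)
    have hx := hode x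
    rw [hflux] at hx
    refine hwd.hasDerivAt.congr_deriv ?_
    have := (aGL_pos (habs x)).ne'
    rw [hw_def]
    field_simp
    linarith
  have hc : Continuous fun x => -(x / (2 * aGL (e x))) := by
    have : Continuous fun x => aGL (e x) := continuous_iff_continuousAt.2 fun x =>
      (differentiableAt_aGL (habs1 x)).continuousAt.comp (hd x).continuousAt
    exact (continuous_id.div (continuous_const.mul this)
      fun x => mul_ne_zero two_ne_zero (aGL_pos (habs x)).ne').neg
  have hw_eq := eq_mul_exp_integral_of_hasDerivAt hc hw
  have hderiv_eq : ∀ x, deriv e x = w x / aGL (e x) := fun x => by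
    rw [hw_def, mul_div_cancel_left₀ _ (aGL_pos (habs x)).ne']
  rcases le_total 0 (w 0) with h0 | h0
  · have hmono : Monotone e := monotone_of_deriv_nonneg hd fun x => by
      rw [hderiv_eq, hw_eq]; exact div_nonneg (by positivity) (aGL_pos (habs x)).le
    rw [max_comm]
    exact abs_le_max_abs_abs (hmono.le_of_tendsto hbot ξ) (hmono.ge_of_tendsto htop ξ)
  · have hanti : Antitone e := antitone_of_deriv_nonpos hd fun x => by
      rw [hderiv_eq, hw_eq]
      exact div_nonpos_of_nonpos_of_nonneg (mul_nonpos_of_nonpos_of_nonneg h0 (exp_pos _).le)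
        (aGL_pos (habs x)).le
    exact abs_le_max_abs_abs (hanti.le_of_tendsto htop ξ) (hanti.ge_of_tendsto hbot ξ)

lemma SchwartzMap.integrable_mul_of_abs_le (f : 𝓢(ℝ, ℝ)) {g : ℝ → ℝ} (hg : Continuous g) {C : ℝ}
    (hC : ∀ x, |g x| ≤ C) : Integrable fun x => f x * g x :=
  f.integrable.mul_bdd hg.aestronglyMeasurable (ae_of_all _ hC)

lemma SchwartzMap.integrable_mul (f g : 𝓢(ℝ, ℝ)) : Integrable fun x => f x * g x :=
  f.integrable_mul_of_abs_le g.continuous (norm_le_seminorm ℝ g)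

lemma SchwartzMap.integrable_sq (f : 𝓢(ℝ, ℝ)) : Integrable fun x => f x ^ 2 := by
  simpa only [sq] using f.integrable_mul f

lemma SchwartzMap.integrable_deriv_sq (f : 𝓢(ℝ, ℝ)) : Integrable fun x => deriv f x ^ 2 :=
  (derivCLM ℝ ℝ f).integrable_sq

/-- One-dimensional Sobolev embedding: `f(x)² = ∫_{-∞}^x 2 f f' ≤ ∫ (f² + f'²)`. -/
lemma SchwartzMap.sq_le_integral_sq_add_deriv_sq (f : 𝓢(ℝ, ℝ)) (x : ℝ) :
    f x ^ 2 ≤ ∫ ξ, (f ξ ^ 2 + deriv f ξ ^ 2) := by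
  have hint : Integrable fun ξ => f ξ ^ 2 + deriv f ξ ^ 2 :=
    f.integrable_sq.add f.integrable_deriv_sq
  have hff' : Integrable fun ξ => 2 * (f ξ * deriv f ξ) :=
    (f.integrable_mul (derivCLM ℝ ℝ f)).const_mul 2
  have hlim : Tendsto (fun ξ => f ξ ^ 2) atBot (𝓝 0) := by
    simpa using ((zero_at_infty f).mono_left atBot_le_cocompact).pow 2
  have hftc : ∫ ξ in Iic x, 2 * (f ξ * deriv f ξ) = f x ^ 2 := by
    simpa using integral_Iic_of_hasDerivAt_of_tendsto (f := fun ξ => f ξ ^ 2)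
      (f.continuous.pow 2).continuousWithinAt
      (fun ξ _ => ((f.hasDerivAt ξ).pow 2).congr_deriv (by ring)) hff'.integrableOn hlim
  calc f x ^ 2 = ∫ ξ in Iic x, 2 * (f ξ * deriv f ξ) := hftc.symm
    _ ≤ ∫ ξ in Iic x, (f ξ ^ 2 + deriv f ξ ^ 2) :=
      setIntegral_mono hff'.integrableOn hint.integrableOn fun ξ => by
        nlinarith [sq_nonneg (f ξ - deriv f ξ)]
    _ ≤ ∫ ξ, (f ξ ^ 2 + deriv f ξ ^ 2) :=
      setIntegral_le_integral hint (ae_of_all _ fun ξ => by positivity)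

lemma SchwartzMap.abs_deriv_le_H2norm (f : 𝓢(ℝ, ℝ)) (x : ℝ) : |deriv f x| ≤ H2norm f := by
  rw [H2norm, ← Real.sqrt_sq_eq_abs]
  refine Real.sqrt_le_sqrt ?_
  calc deriv f x ^ 2 ≤ ∫ ξ, (deriv f ξ ^ 2 + deriv (deriv f) ξ ^ 2) :=
        (derivCLM ℝ ℝ f).sq_le_integral_sq_add_deriv_sq x
    _ ≤ ∫ ξ, (f ξ ^ 2 + deriv f ξ ^ 2 + deriv (deriv f) ξ ^ 2) :=
        integral_mono (f.integrable_deriv_sq.add (derivCLM ℝ ℝ f).integrable_deriv_sq)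
          ((f.integrable_sq.add f.integrable_deriv_sq).add (derivCLM ℝ ℝ f).integrable_deriv_sq)
          fun ξ => by dsimp only; nlinarith [sq_nonneg (f ξ)]

/-- Unlike `hasDerivAt_integral_of_dominated_loc_of_deriv_le`, only one-sided derivatives are
available at the ends of `s`: pass to the limit in the difference quotients by dominated
convergence, bounding them with the mean value theorem. -/
theorem hasDerivWithinAt_integral_of_norm_le {α E : Type*} [MeasurableSpace α] {μ : Measure α}
    [NormedAddCommGroup E] [NormedSpace ℝ E] [CompleteSpace E]
    {s : Set ℝ} (hs : Convex ℝ s) {F F' : ℝ → α → E} {bound : α → ℝ} {t₀ : ℝ} (ht₀ : t₀ ∈ s)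
    (hF_int : ∀ t ∈ s, Integrable (F t) μ)
    (hF : ∀ t ∈ s, ∀ a, HasDerivWithinAt (F · a) (F' t a) s t)
    (h_bound : ∀ t ∈ s, ∀ a, ‖F' t a‖ ≤ bound a) (bound_int : Integrable bound μ) :
    HasDerivWithinAt (fun t => ∫ a, F t a ∂μ) (∫ a, F' t₀ a ∂μ) s t₀ := by
  rw [hasDerivWithinAt_iff_tendsto_slope]
  have hslope : ∀ t ∈ s,
      ∫ a, slope (F · a) t₀ t ∂μ = slope (fun t => ∫ a, F t a ∂μ) t₀ t := fun t ht => by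
    simp only [slope_def_module]
    rw [integral_smul, integral_sub (hF_int t ht) (hF_int t₀ ht₀)]
  refine Tendsto.congr' (eventually_nhdsWithin_of_forall fun t ht => hslope t ht.1) ?_
  refine tendsto_integral_filter_of_dominated_convergence bound
    (eventually_nhdsWithin_of_forall fun t ht => ?_)
    (eventually_nhdsWithin_of_forall fun t ht => ae_of_all _ fun a => ?_) bound_int
    (ae_of_all _ fun a => hasDerivWithinAt_iff_tendsto_slope.1 (hF t₀ ht₀ a))
  · simp only [slope_def_module]
    exact (((hF_int t ht.1).sub (hF_int t₀ ht₀)).smul (t - t₀)⁻¹).aestronglyMeasurable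
  · have hne : t - t₀ ≠ 0 := sub_ne_zero.2 ht.2
    have hmvt := hs.norm_image_sub_le_of_norm_hasDerivWithin_le (fun t ht => hF t ht a)
      (fun t ht => h_bound t ht a) ht₀ ht.1
    rw [slope_def_module, norm_smul, norm_inv, inv_mul_le_iff₀ (norm_pos_iff.2 hne), mul_comm]
    exact hmvt

lemma SchwartzMap.continuous_eval_const (ξ : ℝ) : Continuous fun f : 𝓢(ℝ, ℝ) => f ξ :=
  (ContinuousEvalConst.continuous_eval_const (F := BoundedContinuousFunction ℝ ℝ) ξ).comp
    (toBoundedContinuousFunctionCLM ℝ ℝ ℝ).continuous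

lemma SchwartzMap.one_add_sq_mul_abs_le (f : 𝓢(ℝ, ℝ)) (x : ℝ) :
    (1 + x ^ 2) * |f x| ≤ SchwartzMap.seminorm ℝ 0 0 f + SchwartzMap.seminorm ℝ 2 0 f := by
  have h0 := norm_le_seminorm ℝ f x
  have h2 := norm_pow_mul_le_seminorm ℝ f 2 x
  simp only [Real.norm_eq_abs, sq_abs] at h0 h2
  linarith

lemma exists_one_add_sq_mul_abs_le_of_continuousOn {K : Set ℝ} (hK : IsCompact K)
    {Φ : ℝ → 𝓢(ℝ, ℝ)} (hΦ : ContinuousOn Φ K) :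
    ∃ C, ∀ τ ∈ K, ∀ ξ, (1 + ξ ^ 2) * |Φ τ ξ| ≤ C := by
  have hsem : ∀ k n : ℕ, ContinuousOn (fun τ => SchwartzMap.seminorm ℝ k n (Φ τ)) K :=
    fun k n => ((schwartz_withSeminorms ℝ ℝ ℝ).continuous_seminorm (k, n)).comp_continuousOn hΦ
  obtain ⟨C, hC⟩ := hK.exists_bound_of_continuousOn ((hsem 0 0).add (hsem 2 0))
  exact ⟨C, fun τ hτ ξ => ((Φ τ).one_add_sq_mul_abs_le ξ).trans ((le_abs_self _).trans (hC τ hτ))⟩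

lemma exists_integrable_bound_mul_of_continuousOn {K : Set ℝ} (hK : IsCompact K)
    {Φ Φ' : ℝ → 𝓢(ℝ, ℝ)} (hΦ : ContinuousOn Φ K) (hΦ' : ContinuousOn Φ' K) :
    ∃ bound : ℝ → ℝ, Integrable bound ∧ ∀ τ ∈ K, ∀ ξ, ‖Φ τ ξ * Φ' τ ξ‖ ≤ bound ξ := by
  obtain ⟨C, hC⟩ := exists_one_add_sq_mul_abs_le_of_continuousOn hK hΦ
  obtain ⟨D, hD⟩ := exists_one_add_sq_mul_abs_le_of_continuousOn hK hΦ'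
  refine ⟨fun ξ => C * D * (1 + ξ ^ 2)⁻¹, integrable_inv_one_add_sq.const_mul _,
    fun τ hτ ξ => ?_⟩
  dsimp only
  have hpos : 0 < 1 + ξ ^ 2 := by positivity
  have hΦ'le : |Φ' τ ξ| ≤ D := by nlinarith [hD τ hτ ξ, abs_nonneg (Φ' τ ξ), sq_nonneg ξ]
  rw [Real.norm_eq_abs, abs_mul, ← div_eq_mul_inv, le_div_iff₀ hpos]
  nlinarith [hC τ hτ ξ, abs_nonneg (Φ τ ξ), abs_nonneg (Φ' τ ξ),
    mul_nonneg hpos.le (abs_nonneg (Φ τ ξ))]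

section Energy

variable {K : Set ℝ} {Φ dΦ : ℝ → 𝓢(ℝ, ℝ)}

lemma continuousOn_integral_mul (hK : IsCompact K) (hΦ : ContinuousOn Φ K)
    (hdΦ : ContinuousOn dΦ K) : ContinuousOn (fun τ => ∫ ξ, Φ τ ξ * dΦ τ ξ) K := by
  obtain ⟨bound, hbound, hle⟩ := exists_integrable_bound_mul_of_continuousOn hK hΦ hdΦ
  refine continuousOn_of_dominated (fun τ _ => (Φ τ).integrable_mul (dΦ τ) |>.aestronglyMeasurable)
    (fun τ hτ => ae_of_all _ (hle τ hτ)) hbound (ae_of_all _ fun ξ => ?_)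
  exact ((SchwartzMap.continuous_eval_const ξ).comp_continuousOn hΦ).mul
    ((SchwartzMap.continuous_eval_const ξ).comp_continuousOn hdΦ)

lemma hasDerivWithinAt_half_integral_sq (hK : IsCompact K) (hKc : Convex ℝ K)
    (hΦ : ContinuousOn Φ K) (hdΦ : ContinuousOn dΦ K)
    (hd : ∀ τ ∈ K, ∀ ξ, HasDerivWithinAt (fun t => Φ t ξ) (dΦ τ ξ) K τ) {τ : ℝ} (hτ : τ ∈ K) :
    HasDerivWithinAt (fun t => (1/2) * ∫ ξ, Φ t ξ ^ 2) (∫ ξ, Φ τ ξ * dΦ τ ξ) K τ := by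
  obtain ⟨bound, hbound, hle⟩ := exists_integrable_bound_mul_of_continuousOn hK hΦ hdΦ
  simp only [← integral_const_mul]
  exact hasDerivWithinAt_integral_of_norm_le hKc hτ
    (fun t _ => (Φ t).integrable_sq.const_mul _)
    (fun t ht ξ => ((hd t ht ξ).pow 2).const_mul (1/2) |>.congr_deriv (by ring)) hle hbound

end Energy

lemma SchwartzMap.abs_mul_le_seminorm (f : 𝓢(ℝ, ℝ)) (x : ℝ) :
    |x * f x| ≤ SchwartzMap.seminorm ℝ 1 0 f := by
  simpa [abs_mul] using norm_pow_mul_le_seminorm ℝ f 1 x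

lemma SchwartzMap.integrable_mul_mul_deriv (f : 𝓢(ℝ, ℝ)) :
    Integrable fun x => x * (f x * deriv f x) := by
  refine ((derivCLM ℝ ℝ f).integrable_mul_of_abs_le (by fun_prop) f.abs_mul_le_seminorm).congr
    (ae_of_all _ fun x => ?_)
  simp only [derivCLM_apply]
  ring

lemma SchwartzMap.integral_mul_mul_deriv (f : 𝓢(ℝ, ℝ)) :
    ∫ x, x * (f x * deriv f x) = -(1/2) * ∫ x, f x ^ 2 := by
  have hibp := integral_mul_deriv_eq_deriv_mul_of_integrable (u := fun x => x) (u' := fun _ => 1)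
    (v := fun x => f x ^ 2) (v' := fun x => 2 * (f x * deriv f x))
    (fun x _ => hasDerivAt_id x) (fun x _ => ((f.hasDerivAt x).pow 2).congr_deriv (by ring))
    (by simpa only [Pi.mul_def, mul_left_comm] using f.integrable_mul_mul_deriv.const_mul 2)
    (by simpa only [Pi.mul_def, one_mul] using f.integrable_sq)
    ((f.integrable_mul_of_abs_le (by fun_prop) f.abs_mul_le_seminorm).congr
      (ae_of_all _ fun x => by simp only [Pi.mul_apply]; ring))
  simp only [one_mul, mul_left_comm _ (2 : ℝ), integral_const_mul] at hibp
  linarith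

lemma SchwartzMap.integrable_mul_mul_of_abs_le (ψ φ : 𝓢(ℝ, ℝ)) {η : ℝ → ℝ} (hη : Continuous η)
    {C : ℝ} (hC : ∀ ξ, |η ξ| ≤ C) : Integrable fun ξ => ψ ξ * (η ξ * φ ξ) :=
  ψ.integrable_mul_of_abs_le (hη.mul φ.continuous) fun ξ => by
    rw [abs_mul]
    exact mul_le_mul (hC ξ) (norm_le_seminorm ℝ φ ξ) (abs_nonneg _) ((abs_nonneg _).trans (hC ξ))

lemma mul_le_mul_sq_add_mul_sq {ν : ℝ} (hν : 0 < ν) (a b : ℝ) :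
    a * b ≤ ν / 2 * a ^ 2 + 1 / (2 * ν) * b ^ 2 := by
  rw [div_mul_eq_mul_div, one_div_mul_eq_div, div_add_div _ _ two_ne_zero (by positivity),
    le_div_iff₀ (by positivity)]
  nlinarith [sq_nonneg (ν * a - b)]

lemma SchwartzMap.integral_mul_mul_deriv_le (ψ s : 𝓢(ℝ, ℝ)) {η : ℝ → ℝ} (hη : Continuous η)
    {ηb ν : ℝ} (hηb : ∀ ξ, |η ξ| ≤ ηb) (hν : 0 < ν) :
    ∫ ξ, ψ ξ * (η ξ * deriv s ξ)
      ≤ ν / 2 * (∫ ξ, ψ ξ ^ 2) + ηb ^ 2 / (2 * ν) * ∫ ξ, deriv s ξ ^ 2 := by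
  rw [← integral_const_mul, ← integral_const_mul,
    ← integral_add (ψ.integrable_sq.const_mul _) (s.integrable_deriv_sq.const_mul _)]
  refine integral_mono (ψ.integrable_mul_mul_of_abs_le (derivCLM ℝ ℝ s) hη hηb)
    ((ψ.integrable_sq.const_mul _).add (s.integrable_deriv_sq.const_mul _)) fun ξ => ?_
  have hyoung := mul_le_mul_sq_add_mul_sq hν |ψ ξ| (ηb * |deriv s ξ|)
  calc ψ ξ * (η ξ * deriv s ξ) ≤ |ψ ξ| * (ηb * |deriv s ξ|) := by
        rw [mul_comm (η ξ)]
        refine (le_abs_self _).trans ?_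
        rw [abs_mul, abs_mul, mul_comm |deriv s ξ|]
        exact mul_le_mul_of_nonneg_left
          (mul_le_mul_of_nonneg_right (hηb ξ) (abs_nonneg _)) (abs_nonneg _)
    _ ≤ ν / 2 * ψ ξ ^ 2 + ηb ^ 2 / (2 * ν) * deriv s ξ ^ 2 := by
        convert hyoung using 2 <;> simp only [sq_abs, mul_pow]; ring

section Flux

variable {e : ℝ → ℝ} {ψ : 𝓢(ℝ, ℝ)}

lemma differentiable_AGL_add_deriv_sub (hd : Differentiable ℝ e) (he : ∀ x, |e x| < 1)
    (hη : ∀ x, |e x + deriv ψ x| < 1) :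
    Differentiable ℝ fun x => AGL (e x + deriv ψ x) - AGL (e x) := fun x =>
  ((hasDerivAt_AGL (hη x)).differentiableAt.comp x
    ((hd x).add (derivCLM ℝ ℝ ψ).differentiableAt)).sub
  ((hasDerivAt_AGL (he x)).differentiableAt.comp x (hd x))

lemma integrable_mul_AGL_add_deriv_sub (f : 𝓢(ℝ, ℝ)) (hd : Differentiable ℝ e)
    (he : ∀ x, |e x| < 1 / √3) (hη : ∀ x, |e x + deriv ψ x| < 1 / √3) :
    Integrable fun x => f x * (AGL (e x + deriv ψ x) - AGL (e x)) :=
  f.integrable_mul_of_abs_le (differentiable_AGL_add_deriv_sub hd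
    (fun x => abs_lt_one_of_abs_lt_inv_sqrt_three (he x))
    (fun x => abs_lt_one_of_abs_lt_inv_sqrt_three (hη x))).continuous fun x =>
  calc |AGL (e x + deriv ψ x) - AGL (e x)| ≤ |e x + deriv ψ x - e x| := abs_AGL_sub_le (he x) (hη x)
    _ = |derivCLM ℝ ℝ ψ x| := by rw [add_sub_cancel_left, derivCLM_apply]
    _ ≤ SchwartzMap.seminorm ℝ 0 0 (derivCLM ℝ ℝ ψ) := norm_le_seminorm ℝ (derivCLM ℝ ℝ ψ) x

lemma integral_mul_eq_of_psi_equation {s dψ : 𝓢(ℝ, ℝ)} (hd : Differentiable ℝ e)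
    (he : ∀ ξ, |e ξ| < 1 / √3) (hη : ∀ ξ, |e ξ + deriv ψ ξ| < 1 / √3)
    (heq : ∀ ξ, dψ ξ = deriv (fun x => AGL (e x + deriv ψ x) - AGL (e x)) ξ
      + ξ / 2 * deriv ψ ξ - (1 / 2) * ψ ξ + (e ξ + deriv ψ ξ) * deriv s ξ) :
    ∫ ξ, ψ ξ * dψ ξ = -(∫ ξ, deriv ψ ξ * (AGL (e ξ + deriv ψ ξ) - AGL (e ξ)))
      - (3/4) * (∫ ξ, ψ ξ ^ 2) + ∫ ξ, ψ ξ * ((e ξ + deriv ψ ξ) * deriv s ξ) := by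
  set G : ℝ → ℝ := fun x => AGL (e x + deriv ψ x) - AGL (e x) with hG_def
  have iξψψ' := ψ.integrable_mul_mul_deriv
  have iψ2 := ψ.integrable_sq
  have iψηs' : Integrable fun ξ => ψ ξ * ((e ξ + deriv ψ ξ) * deriv s ξ) :=
    ψ.integrable_mul_mul_of_abs_le (derivCLM ℝ ℝ s)
      (hd.continuous.add (derivCLM ℝ ℝ ψ).continuous) fun ξ => (hη ξ).le
  have hpt : ∀ ξ, ψ ξ * dψ ξ = ψ ξ * deriv G ξ + (1/2) * (ξ * (ψ ξ * deriv ψ ξ))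
      - (1/2) * ψ ξ ^ 2 + ψ ξ * ((e ξ + deriv ψ ξ) * deriv s ξ) := fun ξ => by
    rw [heq]; ring
  have iψG' : Integrable fun ξ => ψ ξ * deriv G ξ := by
    refine ((((ψ.integrable_mul dψ).sub (iξψψ'.const_mul (1/2))).add (iψ2.const_mul (1/2))).sub
      iψηs').congr (ae_of_all _ fun ξ => ?_)
    simp only [Pi.add_apply, Pi.sub_apply, hpt]
    ring
  have hibp : ∫ ξ, ψ ξ * deriv G ξ = -∫ ξ, deriv ψ ξ * G ξ :=
    integral_mul_deriv_eq_deriv_mul_of_integrable (fun x _ => ψ.hasDerivAt x)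
      (fun x _ => (differentiable_AGL_add_deriv_sub hd
        (fun x => abs_lt_one_of_abs_lt_inv_sqrt_three (he x))
        (fun x => abs_lt_one_of_abs_lt_inv_sqrt_three (hη x)) x).hasDerivAt)
      iψG' (integrable_mul_AGL_add_deriv_sub (derivCLM ℝ ℝ ψ) hd he hη)
      (integrable_mul_AGL_add_deriv_sub ψ hd he hη)
  rw [integral_congr_ae (ae_of_all _ hpt), integral_add _ iψηs', integral_sub _ (iψ2.const_mul _),
    integral_add iψG' (iξψψ'.const_mul _), integral_const_mul, integral_const_mul, hibp,
    ψ.integral_mul_mul_deriv, hG_def]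
  · ring
  · exact iψG'.add (iξψψ'.const_mul _)
  · exact (iψG'.add (iξψψ'.const_mul _)).sub (iψ2.const_mul _)

lemma aGL_mul_integral_deriv_sq_le {ηb : ℝ} (hd : Differentiable ℝ e) (hηb : ηb < 1 / √3)
    (he : ∀ ξ, |e ξ| ≤ ηb) (hη : ∀ ξ, |e ξ + deriv ψ ξ| ≤ ηb) :
    aGL ηb * ∫ ξ, deriv ψ ξ ^ 2 ≤ ∫ ξ, deriv ψ ξ * (AGL (e ξ + deriv ψ ξ) - AGL (e ξ)) := by
  rw [← integral_const_mul]
  refine integral_mono (ψ.integrable_deriv_sq.const_mul _)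
    (integrable_mul_AGL_add_deriv_sub (derivCLM ℝ ℝ ψ) hd (fun ξ => (he ξ).trans_lt hηb)
      fun ξ => (hη ξ).trans_lt hηb) fun ξ => ?_
  simpa using aGL_mul_sq_le_mul_AGL_sub (hηb.trans one_div_sqrt_three_lt_one) (he ξ) (hη ξ)

end Flux

theorem energy_inequality_E0_general
    (ηp ηm : ℝ)
    (hp : ηp ∈ Set.Ioo (-(1 / Real.sqrt 3)) (1 / Real.sqrt 3))
    (hm : ηm ∈ Set.Ioo (-(1 / Real.sqrt 3)) (1 / Real.sqrt 3))
    (e : ℝ → ℝ) (he : IsMixingProfile ηp ηm e)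
    (η₀ ηb ab ε : ℝ)
    (hη₀ : η₀ = max |ηp| |ηm|) (hηb : ηb = (η₀ + 1 / Real.sqrt 3) / 2)
    (hab : ab = aGL ηb) (hε : ε = ηb - η₀)
    (τ₁ τ₂ : ℝ)
    (Ψ S dΨ dS : ℝ → SchwartzMap ℝ ℝ)
    (hsol : IsSolution212 e Ψ S dΨ dS (Set.Icc τ₁ τ₂))
    (hsmall : ∀ τ ∈ Set.Icc τ₁ τ₂, H2norm (Ψ τ) + H1norm (S τ) ≤ ε) :
    ∀ ν > (0:ℝ), ∃ K₂ > (0:ℝ), ∃ E₀' : ℝ → ℝ,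
      ContinuousOn E₀' (Set.Icc τ₁ τ₂) ∧
      (∀ τ ∈ Set.Icc τ₁ τ₂,
        HasDerivWithinAt (fun t => (1/2) * ∫ ξ : ℝ, (Ψ t ξ) ^ 2)
          (E₀' τ) (Set.Icc τ₁ τ₂) τ) ∧
      (∀ τ ∈ Set.Icc τ₁ τ₂,
        E₀' τ ≤ -(3/2 - ν) * ((1/2) * ∫ ξ : ℝ, (Ψ τ ξ) ^ 2)
          - ab * (∫ ξ : ℝ, (deriv (Ψ τ) ξ) ^ 2)
          + K₂ * ∫ ξ : ℝ, (deriv (S τ) ξ) ^ 2) := by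
  intro ν hν
  obtain ⟨hΨ, -, hdΨ, -, hderΨ, -, heqΨ, -⟩ := hsol
  have hη₀0 : 0 ≤ η₀ := hη₀ ▸ (abs_nonneg ηp).trans (le_max_left _ _)
  have hη₀3 : η₀ < 1 / √3 := hη₀ ▸ max_lt (abs_lt.2 hp) (abs_lt.2 hm)
  have hηb3 : ηb < 1 / √3 := by linarith
  have hηb0 : 0 < ηb := by rw [hηb]; positivity
  refine ⟨ηb ^ 2 / (2 * ν), by positivity, fun τ => ∫ ξ, Ψ τ ξ * dΨ τ ξ,
    continuousOn_integral_mul isCompact_Icc hΨ hdΨ,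
    fun τ hτ => hasDerivWithinAt_half_integral_sq isCompact_Icc (convex_Icc τ₁ τ₂) hΨ hdΨ hderΨ hτ,
    fun τ hτ => ?_⟩
  have he₀ : ∀ ξ, |e ξ| ≤ η₀ := hη₀ ▸ he.abs_le
  have hH1 : 0 ≤ H1norm (S τ) := Real.sqrt_nonneg _
  have hψ' : ∀ ξ, |deriv (Ψ τ) ξ| ≤ ε := fun ξ =>
    ((Ψ τ).abs_deriv_le_H2norm ξ).trans (by linarith [hsmall τ hτ])
  have hη : ∀ ξ, |e ξ + deriv (Ψ τ) ξ| ≤ ηb := fun ξ =>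
    (abs_add_le _ _).trans (by linarith [he₀ ξ, hψ' ξ])
  have hd : Differentiable ℝ e := he.1.differentiable (by norm_num)
  have he₀b : ∀ ξ, |e ξ| ≤ ηb := fun ξ => (he₀ ξ).trans (by linarith)
  have henergy := integral_mul_eq_of_psi_equation hd (fun ξ => (he₀b ξ).trans_lt hηb3)
    (fun ξ => (hη ξ).trans_lt hηb3) (heqΨ τ hτ)
  have hflux := aGL_mul_integral_deriv_sq_le hd hηb3 he₀b hη
  have hcoupling := (Ψ τ).integral_mul_mul_deriv_le (S τ) (η := fun ξ => e ξ + deriv (Ψ τ) ξ)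
    (he.1.continuous.add (derivCLM ℝ ℝ (Ψ τ)).continuous) hη hν
  dsimp only
  rw [hab]
  linarith

/-- Energy inequality for `E₀(τ) = (1/2)∫ ψ(τ,ξ)² dξ` (Lemma 6.1). -/
theorem energy_inequality_E0
    (ηp ηm : ℝ)
    (hp : ηp ∈ Set.Ioo (-(1 / Real.sqrt 3)) (1 / Real.sqrt 3))
    (hm : ηm ∈ Set.Ioo (-(1 / Real.sqrt 3)) (1 / Real.sqrt 3))
    (hne : ηp ≠ ηm)
    (e : ℝ → ℝ) (he : IsMixingProfile ηp ηm e)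
    (η₀ ηb ab ε : ℝ)
    (hη₀ : η₀ = max |ηp| |ηm|) (hηb : ηb = (η₀ + 1 / Real.sqrt 3) / 2)
    (hab : ab = aGL ηb) (hε : ε = ηb - η₀)
    (τ₁ τ₂ : ℝ) (hτ₁ : 0 ≤ τ₁) (hτ₁₂ : τ₁ ≤ τ₂)
    (Ψ S dΨ dS : ℝ → SchwartzMap ℝ ℝ)
    (hsol : IsSolution212 e Ψ S dΨ dS (Set.Icc τ₁ τ₂))
    (hsmall : ∀ τ ∈ Set.Icc τ₁ τ₂, H2norm (Ψ τ) + H1norm (S τ) ≤ ε) :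
    ∀ ν > (0:ℝ), ∃ K₂ > (0:ℝ), ∃ E₀' : ℝ → ℝ,
      ContinuousOn E₀' (Set.Icc τ₁ τ₂) ∧
      (∀ τ ∈ Set.Icc τ₁ τ₂,
        HasDerivWithinAt (fun t => (1/2) * ∫ ξ : ℝ, (Ψ t ξ) ^ 2)
          (E₀' τ) (Set.Icc τ₁ τ₂) τ) ∧
      (∀ τ ∈ Set.Icc τ₁ τ₂,
        E₀' τ ≤ -(3/2 - ν) * ((1/2) * ∫ ξ : ℝ, (Ψ τ ξ) ^ 2)
          - ab * (∫ ξ : ℝ, (deriv (Ψ τ) ξ) ^ 2)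
          + K₂ * ∫ ξ : ℝ, (deriv (S τ) ξ) ^ 2) :=
  energy_inequality_E0_general ηp ηm hp hm e he η₀ ηb ab ε hη₀ hηb hab hε τ₁ τ₂ Ψ S dΨ dS hsol
    hsmall
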